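/- Every perfectly normal Hausdorff space which is a continuous image of some compact linearly ordered topological space is a continuous image of some perfectly normal compact linearly ordered topological space. -/

import Mathlib

universe u

open Set Topology

/-- The character of a space `X` at a point `x`: the least cardinality of a
neighborhood base of `X` at `x`. -/
noncomputable def nhdsChar (X : Type u) [TopologicalSpace X] (x : X) : Cardinal.{u} :=
  sInf { c | ∃ B : Set (Set X), Cardinal.mk B = c ∧ (∀ U ∈ B, U ∈ nhds x) ∧
      ∀ V ∈ nhds x, ∃ U ∈ B, U ⊆ V }

/-- The character of a space: `χ(X) = sup_{x ∈ X} χ(x, X)`. -/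
noncomputable def spaceChar (X : Type u) [TopologicalSpace X] : Cardinal.{u} :=
  ⨆ x : X, nhdsChar X x

/-- The cellularity of a space: the supremum of cardinalities of pairwise disjoint
families of nonempty open subsets. -/
noncomputable def cellularity (X : Type u) [TopologicalSpace X] : Cardinal.{u} :=
  sSup { c | ∃ 𝒰 : Set (Set X), Cardinal.mk 𝒰 = c ∧ (∀ U ∈ 𝒰, IsOpen U ∧ U.Nonempty) ∧
      𝒰.PairwiseDisjoint id }

/-- The density of a space: the least cardinality of a dense subset. -/
noncomputable def density (X : Type u) [TopologicalSpace X] : Cardinal.{u} :=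
  sInf { c | ∃ D : Set X, Cardinal.mk D = c ∧ Dense D }

/-- The weight of a space: the least cardinality of a base for the topology. -/
noncomputable def weight (X : Type u) [TopologicalSpace X] : Cardinal.{u} :=
  sInf { c | ∃ B : Set (Set X), Cardinal.mk B = c ∧ TopologicalSpace.IsTopologicalBasis B }

/-- A surjective map is irreducible if no proper closed subset maps onto the codomain. -/
def IsIrreducibleMap {K : Type*} {X : Type*} [TopologicalSpace K] [TopologicalSpace X]
    (f : K → X) : Prop :=
  Function.Surjective f ∧ ∀ A : Set K, IsClosed A → A ≠ univ → f '' A ≠ univ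

/-- `C` is an order component of `A`: a maximal convex subset of `A`. -/
def IsOrderComponent {K : Type*} [LinearOrder K] (A C : Set K) : Prop :=
  C ⊆ A ∧ C.OrdConnected ∧ ∀ C' : Set K, C ⊆ C' → C' ⊆ A → C'.OrdConnected → C' = C

/-- A map from a linearly ordered set is order-light if every order component of every
fiber is a singleton. -/
def OrderLight {K : Type*} {X : Type*} [LinearOrder K] (f : K → X) : Prop :=
  ∀ x : X, ∀ C : Set K, IsOrderComponent (f ⁻¹' {x}) C → ∃ k, C = {k}

/-- The countable chain condition: every pairwise disjoint family of nonempty open sets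
is countable. -/
def CCC (X : Type*) [TopologicalSpace X] : Prop :=
  ∀ 𝒰 : Set (Set X), (∀ U ∈ 𝒰, IsOpen U ∧ U.Nonempty) → 𝒰.PairwiseDisjoint id → 𝒰.Countable

/-- A space is non-archimedean if it has a base any two members of which are either
disjoint or comparable by inclusion. -/
def NonArchimedean (X : Type*) [TopologicalSpace X] : Prop :=
  ∃ B : Set (Set X), TopologicalSpace.IsTopologicalBasis B ∧
    ∀ U ∈ B, ∀ V ∈ B, Disjoint U V ∨ U ⊆ V ∨ V ⊆ U

/-- A space is perfectly normal if it is normal and every closed set is a Gδ-set. -/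
def PerfNormal (X : Type*) [TopologicalSpace X] : Prop :=
  NormalSpace X ∧ ∀ A : Set X, IsClosed A → IsGδ A

/-- `X` is a continuous image of some compact linearly ordered topological space
(a linearly ordered set equipped with its order topology). -/
def ContinuousImageOfCompactLOTS (X : Type u) [TopologicalSpace X] : Prop :=
  ∃ (K : Type u) (lo : LinearOrder K) (tK : TopologicalSpace K),
    letI := lo; letI := tK;
    OrderTopology K ∧ CompactSpace K ∧ ∃ f : K → X, Continuous f ∧ Function.Surjective f

/-- A closed set `A` is a strong T-set: the boundary of each connected component of the
complement consists of exactly two points, and each such component is homeomorphic to the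
open unit interval `(0,1)`. -/
def IsStrongTSet {Y : Type*} [TopologicalSpace Y] (A : Set Y) : Prop :=
  IsClosed A ∧ ∀ x ∈ Aᶜ,
    (∃ a b : Y, a ≠ b ∧ frontier (connectedComponentIn Aᶜ x) = {a, b}) ∧
    Nonempty (↥(connectedComponentIn Aᶜ x) ≃ₜ ↥(Ioo (0:ℝ) 1))

/-- Souslin's Hypothesis: every ccc LOTS is separable. -/
def SouslinHypothesis : Prop :=
  ∀ (L : Type u) (lo : LinearOrder L) (tL : TopologicalSpace L),
    letI := lo; letI := tL;
    OrderTopology L → CCC L → TopologicalSpace.SeparableSpace L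

/-!
Since `X` is compact and its closed sets are `G_δ`, the union of a disjoint family of nonempty open
subsets of `X` is a countable union of compact sets, so `X` satisfies the countable chain condition.
Restrict the given map to a minimal closed subset `A` of the compact LOTS that still maps onto `X`.
The restriction is irreducible, and irreducible maps pull the ccc back: a nonempty open `U ⊆ A`
yields the nonempty open set of points of `X` whose whole fibre lies in `U`. Finally `A` is itself
a compact LOTS, and in a ccc LOTS every subset has countable cofinality and coinitiality, so each of
the countably many order-connected components of an open set, hence the open set itself, is an
`F_σ`.
-/

section CCC

variable {X : Type*} [TopologicalSpace X]

theorem CCC.countable_of_pairwiseDisjoint (hX : CCC X) {ι : Type*} {s : Set ι} {U : ι → Set X}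
    (hU : ∀ i ∈ s, IsOpen (U i)) (hne : ∀ i ∈ s, (U i).Nonempty) (hd : s.PairwiseDisjoint U) :
    s.Countable := by
  have hinj : InjOn U s := fun i hi j hj hij => by
    by_contra hij'
    obtain ⟨x, hx⟩ := hne i hi
    exact Set.disjoint_left.mp (hd hi hj hij') hx (hij ▸ hx)
  refine countable_of_injective_of_countable_image hinj (hX _ ?_ ?_)
  · rintro _ ⟨i, hi, rfl⟩
    exact ⟨hU i hi, hne i hi⟩
  · rintro _ ⟨i, hi, rfl⟩ _ ⟨j, hj, rfl⟩ hij
    exact hd hi hj (ne_of_apply_ne U hij)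

theorem CCC.of_compactSpace_of_isGδ [CompactSpace X] (hGδ : ∀ A : Set X, IsClosed A → IsGδ A) :
    CCC X := by
  intro 𝒰 hU hd
  obtain ⟨T, hTo, hTc, hT⟩ := hGδ _ (isOpen_sUnion fun U hU' => (hU U hU').1).isClosed_compl
  have hW : ⋃₀ 𝒰 = ⋃ t ∈ T, tᶜ := by
    rw [← compl_compl (⋃₀ 𝒰), hT, sInter_eq_biInter, compl_iInter₂]
  have hcover : ∀ t ∈ T, ∃ 𝒱 ⊆ 𝒰, 𝒱.Finite ∧ tᶜ ⊆ ⋃ V ∈ 𝒱, V := fun t ht =>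
    (hTo t ht).isClosed_compl.isCompact.elim_finite_subcover_image (c := id)
      (fun U hU' => (hU U hU').1) (sUnion_eq_biUnion ▸ hW ▸ subset_biUnion_of_mem ht)
  choose! 𝒱 h𝒱𝒰 h𝒱fin h𝒱 using hcover
  refine (hTc.biUnion fun t ht => (h𝒱fin t ht).countable).mono fun U hU' => ?_
  obtain ⟨x, hx⟩ := (hU U hU').2
  obtain ⟨t, ht, hxt⟩ := mem_iUnion₂.mp (hW ▸ mem_sUnion_of_mem hx hU')
  obtain ⟨V, hV, hxV⟩ := mem_iUnion₂.mp (h𝒱 t ht hxt)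
  obtain rfl : U = V := by_contra fun hUV =>
    Set.disjoint_left.mp (hd hU' (h𝒱𝒰 t ht hV) hUV) hx hxV
  exact mem_biUnion ht hV

theorem CCC.of_isIrreducibleMap {K : Type*} [TopologicalSpace K] [CompactSpace K] [T2Space X]
    {f : K → X} (hf : Continuous f) (hirr : IsIrreducibleMap f) (hX : CCC X) : CCC K := by
  intro 𝒰 hU hd
  refine hX.countable_of_pairwiseDisjoint (U := fun U => (f '' Uᶜ)ᶜ) (fun U hU' => ?_)
    (fun U hU' => ?_) fun U hU' V hV hUV => ?_
  · exact ((hU U hU').1.isClosed_compl.isCompact.image hf).isClosed.isOpen_compl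
  · exact nonempty_compl.2 <|
      hirr.2 _ (hU U hU').1.isClosed_compl (compl_ne_univ.2 (hU U hU').2)
  · refine Set.disjoint_left.2 fun x hxU hxV => ?_
    obtain ⟨k, rfl⟩ := hirr.1 x
    have hkU : k ∈ U := not_not.mp fun h => hxU (mem_image_of_mem f h)
    have hkV : k ∈ V := not_not.mp fun h => hxV (mem_image_of_mem f h)
    exact Set.disjoint_left.mp (hd hU' hV hUV) hkU hkV

end CCC

theorem TopologicalSpace.eq_of_le_of_compactSpace_of_t2Space {α : Type*}
    {t t' : TopologicalSpace α} [@CompactSpace α t] [@T2Space α t'] (h : t ≤ t') : t = t' :=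
  le_antisymm h fun s hs => by
    have := @Continuous.isClosedMap _ _ t t' _ _ _ (continuous_id_of_le h) _
      (@IsOpen.isClosed_compl _ t _ hs)
    rwa [image_id, @isClosed_compl_iff _ t'] at this

/-- The subspace topology of `s` is always finer than the order topology of `s`; compactness
forces equality. -/
theorem OrderTopology.subtype_of_compactSpace {α : Type*} [LinearOrder α] [TopologicalSpace α]
    [OrderClosedTopology α] (s : Set α) [CompactSpace s] : OrderTopology s := by
  have hle : instTopologicalSpaceSubtype ≤ Preorder.topology s := by
    refine le_generateFrom ?_
    rintro _ ⟨a, rfl | rfl⟩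
    exacts [isOpen_Ioi.preimage continuous_subtype_val, isOpen_Iio.preimage continuous_subtype_val]
  have : @OrderTopology s (Preorder.topology s) _ := @OrderTopology.mk _ (Preorder.topology s) _ rfl
  exact ⟨TopologicalSpace.eq_of_le_of_compactSpace_of_t2Space hle⟩

section LinearOrder

variable {α : Type*} [LinearOrder α] [TopologicalSpace α]

/-- A maximal disjoint family of intervals `(a, c)` with endpoints in `S` and meeting `S` is
countable, and the set of its right endpoints is cofinal: a point of `S` above all of them would
leave room for one more such interval. -/
theorem CCC.exists_countable_cofinal [OrderClosedTopology α] (hα : CCC α) (S : Set α) :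
    ∃ D ⊆ S, D.Countable ∧ ∀ p ∈ S, ∃ d ∈ D, p ≤ d := by
  by_contra! hS
  let I : α × α → Set α := fun q => Ioo q.1 q.2
  let T : Set (α × α) := {q | q.1 ∈ S ∧ q.2 ∈ S ∧ (I q ∩ S).Nonempty}
  obtain ⟨P, ⟨hPT, hPd⟩, hPmax⟩ :
      ∃ P, Maximal (fun P : Set (α × α) => P ⊆ T ∧ P.PairwiseDisjoint I) P := by
    refine zorn_subset _ fun c hc hchain => ⟨⋃₀ c, ⟨sUnion_subset fun P hP => (hc hP).1, ?_⟩,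
      fun P hP => subset_sUnion_of_mem hP⟩
    exact (pairwiseDisjoint_sUnion hchain.directedOn).2 fun P hP => (hc hP).2
  have hPc : P.Countable := hα.countable_of_pairwiseDisjoint (fun _ _ => isOpen_Ioo)
    (fun q hq => (hPT hq).2.2.mono inter_subset_left) hPd
  obtain ⟨p, hpS, hp⟩ := hS (Prod.snd '' P) (image_subset_iff.2 fun q hq => (hPT hq).2.1)
    (hPc.image _)
  obtain ⟨y, hyS, hpy⟩ := hS {p} (singleton_subset_iff.2 hpS) (countable_singleton p)
  obtain ⟨z, hzS, hyz⟩ := hS {y} (singleton_subset_iff.2 hyS) (countable_singleton y)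
  simp only [mem_singleton_iff, forall_eq] at hpy hyz
  have hnew : (p, z) ∉ P := fun h => (hp z (mem_image_of_mem _ h)).not_gt (hpy.trans hyz)
  refine hnew (hPmax ⟨insert_subset ⟨hpS, hzS, y, ⟨hpy, hyz⟩, hyS⟩ hPT, ?_⟩
    (subset_insert _ _) (mem_insert _ _))
  refine hPd.insert fun q hq _ => Set.disjoint_left.2 fun x hx hxq => ?_
  exact (hxq.2.trans (hp q.2 (mem_image_of_mem _ hq))).not_gt hx.1

theorem CCC.exists_countable_coinitial [OrderClosedTopology α] (hα : CCC α) (S : Set α) :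
    ∃ E ⊆ S, E.Countable ∧ ∀ p ∈ S, ∃ e ∈ E, e ≤ p :=
  CCC.exists_countable_cofinal (α := αᵒᵈ) hα S

theorem CCC.isGδ_compl_of_ordConnected [OrderClosedTopology α] (hα : CCC α) {s : Set α}
    (hs : s.OrdConnected) : IsGδ sᶜ := by
  obtain ⟨D, hDs, hDc, hD⟩ := hα.exists_countable_cofinal s
  obtain ⟨E, hEs, hEc, hE⟩ := hα.exists_countable_coinitial s
  have hs_eq : s = ⋃ q ∈ E ×ˢ D, Icc q.1 q.2 := by
    refine Subset.antisymm (fun x hx => ?_)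
      (iUnion₂_subset fun q hq => hs.out (hEs hq.1) (hDs hq.2))
    obtain ⟨d, hd, hxd⟩ := hD x hx
    obtain ⟨e, he, hex⟩ := hE x hx
    exact mem_iUnion₂.2 ⟨(e, d), ⟨he, hd⟩, hex, hxd⟩
  rw [hs_eq, compl_iUnion₂]
  exact .biInter_of_isOpen (hEc.prod hDc) fun q _ => isClosed_Icc.isOpen_compl

variable [OrderTopology α]

theorem IsOpen.ordConnectedComponent {s : Set α} (hs : IsOpen s) (x : α) :
    IsOpen (ordConnectedComponent s x) := by
  refine isOpen_iff_mem_nhds.2 fun y hy => ?_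
  rw [ordConnectedComponent_eq hy]
  exact ordConnectedComponent_mem_nhds.2 (hs.mem_nhds (ordConnectedComponent_subset hy))

theorem CCC.isGδ_of_isClosed (hα : CCC α) {s : Set α} (hs : IsClosed s) : IsGδ s := by
  let 𝒞 := ordConnectedComponent sᶜ '' sᶜ
  have h𝒞 : 𝒞.Countable := by
    refine hα 𝒞 (fun _ ⟨x, hx, hC⟩ => hC ▸ ⟨hs.isOpen_compl.ordConnectedComponent x,
      nonempty_ordConnectedComponent.2 hx⟩) ?_
    rintro _ ⟨x, -, rfl⟩ _ ⟨y, -, rfl⟩ hxy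
    refine Set.disjoint_left.2 fun z hzx hzy => hxy ?_
    rw [ordConnectedComponent_eq hzx, ordConnectedComponent_eq hzy]
  have hs_eq : s = ⋂₀ (compl '' 𝒞) := by
    have : sᶜ = ⋃₀ 𝒞 := Subset.antisymm
      (fun x hx => ⟨_, mem_image_of_mem _ hx, self_mem_ordConnectedComponent.2 hx⟩)
      (sUnion_subset fun _ ⟨_, _, hC⟩ => hC ▸ ordConnectedComponent_subset)
    rw [← compl_sUnion, ← this, compl_compl]
  rw [hs_eq]
  exact .sInter (fun _ ⟨_, ⟨x, _, hC⟩, h⟩ => h ▸ hC ▸ hα.isGδ_compl_of_ordConnected inferInstance)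
    (h𝒞.image _)

end LinearOrder

theorem CCC.perfNormal {α : Type*} [LinearOrder α] [TopologicalSpace α] [OrderTopology α]
    [CompactSpace α] (hα : CCC α) : PerfNormal α :=
  ⟨inferInstance, fun _ hs => hα.isGδ_of_isClosed hs⟩

theorem image_of_perfectlyNormal_compact_LOTS (X : Type u) [TopologicalSpace X]
    [T2Space X] (hpn : PerfNormal X) (hX : ContinuousImageOfCompactLOTS X) :
    ∃ (K : Type u) (lo : LinearOrder K) (tK : TopologicalSpace K),
      letI := lo; letI := tK;
      OrderTopology K ∧ CompactSpace K ∧ PerfNormal K ∧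
        ∃ f : K → X, Continuous f ∧ Function.Surjective f := by
  obtain ⟨K, _, _, _, _, f, hf, hfs⟩ := hX
  have : CompactSpace X := hfs.compactSpace hf
  obtain ⟨A, _, hA, hAmin⟩ := exists_compact_surjective_zorn_subset hf hfs
  have hirr : IsIrreducibleMap (A.domRestrict f) :=
    ⟨range_eq_univ.1 (by rw [range_domRestrict, hA]), fun B hB hBne => hAmin B hBne hB⟩
  have hcont : Continuous (A.domRestrict f) := hf.comp continuous_subtype_val
  have : OrderTopology A := .subtype_of_compactSpace A
  have hccc : CCC A := (CCC.of_compactSpace_of_isGδ hpn.2).of_isIrreducibleMap hcont hirr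
  exact ⟨A, inferInstance, inferInstance, ‹_›, ‹_›, hccc.perfNormal, A.domRestrict f, hcont, hirr.1⟩
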